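/- Let λ, μ be compositions of r with μ ⊴ λ obtained from the two-row setup, X ⊆ Z with |X| ≤ n, and d ∈ D_λ. Then the set W_{X,d} := W_{μ_X} ∩ (D_{ν_X} ∩ W_λ) d d_X^{-1} contains at most one element. -/

import Mathlib

open Equiv Finset

noncomputable section

/-- Coxeter length of a permutation of `Fin r` = number of inversions. -/
def permLength {r : ℕ} (w : Equiv.Perm (Fin r)) : ℕ :=
  (Finset.univ.filter (fun p : Fin r × Fin r => p.1 < p.2 ∧ w p.2 < w p.1)).card

/-- the simple transpositions `(i, i+1)`. -/
def IsSimpleTransposition {r : ℕ} (s : Equiv.Perm (Fin r)) : Prop :=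
  ∃ (i : ℕ) (h : i + 1 < r), s = Equiv.swap ⟨i, Nat.lt_of_succ_lt h⟩ ⟨i + 1, h⟩

/-- strong Bruhat order: `u ⊴ v` iff `u` is the product of a sublist of a reduced word for `v`. -/
def BruhatLE {r : ℕ} (u v : Equiv.Perm (Fin r)) : Prop :=
  ∃ L : List (Equiv.Perm (Fin r)),
    (∀ s ∈ L, IsSimpleTransposition s) ∧ L.prod = v ∧ L.length = permLength v ∧
      ∃ L' : List (Equiv.Perm (Fin r)), L'.Sublist L ∧ L'.prod = u

def partialSum (f : ℕ → ℕ) (e : ℕ) : ℕ := ∑ j ∈ Finset.range e, f j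

/-- a composition of `r`: a (finitely supported) sequence of non-negative integers summing to `r`. -/
def IsCompositionOf (f : ℕ → ℕ) (r : ℕ) : Prop :=
  (Function.support f).Finite ∧ ∑ᶠ i, f i = r

/-- dominance order on compositions: `DomLE f g` means `f ⊴ g`. -/
def DomLE (f g : ℕ → ℕ) : Prop := ∀ e : ℕ, partialSum f e ≤ partialSum g e

/-- (0-indexed) row of the box `b` in the Young diagram of the composition `f`,
boxes being numbered `0, 1, 2, …` along the rows. -/
def rowIndex {r : ℕ} (f : ℕ → ℕ) (b : Fin r) : ℕ :=
  sInf {i : ℕ | (b : ℕ) < partialSum f (i + 1)}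

/-- the Young (standard parabolic) subgroup `W_f`, as a set of permutations. -/
def YoungSubgroup {r : ℕ} (f : ℕ → ℕ) : Set (Equiv.Perm (Fin r)) :=
  {w | ∀ b : Fin r, rowIndex f (w b) = rowIndex f b}

/-- `W_{f,g}`; positions are acted on on the right, `(b)w = w⁻¹ b`. -/
def Wlm {r : ℕ} (f g : ℕ → ℕ) : Set (Equiv.Perm (Fin r)) :=
  {w | ∀ (i : ℕ) (b : Fin r), i ≤ rowIndex f b → i ≤ rowIndex g (w⁻¹ b)}

/-- `D_f`: minimal length representatives of the cosets `W_f d`. -/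
def minimalCosetReps {r : ℕ} (f : ℕ → ℕ) : Set (Equiv.Perm (Fin r)) :=
  {d | ∀ π ∈ YoungSubgroup (r := r) f, permLength d ≤ permLength (π * d)}

/-- a tableau of shape `f` is encoded by its entry function, a permutation of the boxes;
the tableau `t^f d` corresponds to the entry function `d⁻¹`. -/
def IsRowStandard {r : ℕ} (f : ℕ → ℕ) (t : Equiv.Perm (Fin r)) : Prop :=
  ∀ b₁ b₂ : Fin r, rowIndex f b₁ = rowIndex f b₂ → b₁ < b₂ → t b₁ < t b₂

/-- generalized tableaux are functions `Fin r → ℕ`; content `g` (0-indexed entries). -/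
def HasContent {r : ℕ} (g : ℕ → ℕ) (T : Fin r → ℕ) : Prop :=
  ∀ i : ℕ, (Finset.univ.filter (fun b => T b = i)).card = g i

def IsRowSemistandard {r : ℕ} (f : ℕ → ℕ) (T : Fin r → ℕ) : Prop :=
  ∀ b₁ b₂ : Fin r, rowIndex f b₁ = rowIndex f b₂ → b₁ ≤ b₂ → T b₁ ≤ T b₂

/-- ascending: every entry in row `i` is `≥ i`. -/
def IsAscending {r : ℕ} (f : ℕ → ℕ) (T : Fin r → ℕ) : Prop :=
  ∀ b : Fin r, rowIndex f b ≤ T b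

/-- `T^λ_g`: the boxes filled in the natural order with `g 0` zeroes, `g 1` ones, … -/
def stdTableau {r : ℕ} (g : ℕ → ℕ) : Fin r → ℕ := fun b => rowIndex g b

/-- conjugate (dual) of a partition. -/
def conjFn (l : ℕ → ℕ) : ℕ → ℕ := fun i => Nat.card {k : ℕ | i + 1 ≤ l k}

/-- (row, column) coordinates of box `b` in the diagram of `f`. -/
def boxPlace {r : ℕ} (f : ℕ → ℕ) (b : Fin r) : ℕ × ℕ :=
  (rowIndex f b, (b : ℕ) - partialSum f (rowIndex f b))

/-- the set `Z` of entries of rows `k` and `k+1` of the tableau (with entry function) `t`. -/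
def rowsKK1 {r : ℕ} (l : ℕ → ℕ) (k : ℕ) (t : Equiv.Perm (Fin r)) : Finset (Fin r) :=
  (Finset.univ.filter (fun b => rowIndex l b = k ∨ rowIndex l b = k + 1)).image t

/-- the composition `μ_X` (with `c = |X|`). -/
def muComp (l : ℕ → ℕ) (k c : ℕ) : ℕ → ℕ :=
  fun j => if j = k then l k + l (k + 1) - c else if j = k + 1 then c else l j

/-- the composition `ν_X` (with `c = |X|`). -/
def nuComp (l : ℕ → ℕ) (k c : ℕ) : ℕ → ℕ :=
  fun j => if j ≤ k then l j
    else if j = k + 1 then l (k + 1) - c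
    else if j = k + 2 then c
    else l (j - 1)

/-- `dX` encodes the row-standard `mu`-tableau `t_X = t^{mu} dX` (entry function `dX⁻¹`)
which agrees with `t` outside rows `k, k+1`, has `X` in row `k+1` and `Z \ X` in row `k`. -/
def IsTabX {r : ℕ} (l mu : ℕ → ℕ) (k : ℕ) (t : Equiv.Perm (Fin r)) (X : Finset (Fin r))
    (dX : Equiv.Perm (Fin r)) : Prop :=
  IsRowStandard mu dX⁻¹ ∧
  (∀ b : Fin r, rowIndex mu b ≠ k → rowIndex mu b ≠ k + 1 → dX⁻¹ b = t b) ∧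
  (Finset.univ.filter (fun b => rowIndex mu b = k + 1)).image (fun b => dX⁻¹ b) = X ∧
  (Finset.univ.filter (fun b => rowIndex mu b = k)).image (fun b => dX⁻¹ b) = rowsKK1 l k t \ X

/-- the set `W_{X,d} = W_{μ_X} ∩ (D_{ν_X} ∩ W_λ) d d_X⁻¹`. -/
def WXset {r : ℕ} (mu nu l : ℕ → ℕ) (dX d : Equiv.Perm (Fin r)) : Set (Equiv.Perm (Fin r)) :=
  {w | w ∈ YoungSubgroup (r := r) mu ∧
    ∃ e, e ∈ minimalCosetReps (r := r) nu ∧ e ∈ YoungSubgroup (r := r) l ∧ w = e * d * dX⁻¹}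

/-! ### Auxiliary lemmas -/

lemma ps_succ (f : ℕ → ℕ) (e : ℕ) : partialSum f (e + 1) = partialSum f e + f e :=
  Finset.sum_range_succ f e

lemma partialSum_mono (f : ℕ → ℕ) : Monotone (partialSum f) := fun _ _ h =>
  Finset.sum_le_sum_of_subset (Finset.range_subset_range.mpr h)

lemma rowIndex_eq {r : ℕ} (f : ℕ → ℕ) (b : Fin r) (j : ℕ)
    (h1 : partialSum f j ≤ (b : ℕ)) (h2 : (b : ℕ) < partialSum f (j + 1)) :
    rowIndex f b = j := by
  have hnon : {i : ℕ | (b : ℕ) < partialSum f (i + 1)}.Nonempty := ⟨j, h2⟩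
  have hle : sInf {i : ℕ | (b : ℕ) < partialSum f (i + 1)} ≤ j := Nat.sInf_le h2
  have hge : j ≤ sInf {i : ℕ | (b : ℕ) < partialSum f (i + 1)} := by
    apply le_csInf hnon
    intro i hi
    by_contra hcon
    push_neg at hcon
    have hm : partialSum f (i + 1) ≤ partialSum f j := partialSum_mono f (by omega)
    have hi' : (b : ℕ) < partialSum f (i + 1) := hi
    omega
  exact le_antisymm hle hge

lemma rowIndex_bounds {r : ℕ} (f : ℕ → ℕ) (b : Fin r)
    (hne : ∃ i, (b : ℕ) < partialSum f (i + 1)) :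
    partialSum f (rowIndex f b) ≤ (b : ℕ) ∧ (b : ℕ) < partialSum f (rowIndex f b + 1) := by
  have hmem : rowIndex f b ∈ {i : ℕ | (b : ℕ) < partialSum f (i + 1)} := Nat.sInf_mem hne
  refine ⟨?_, hmem⟩
  rcases Nat.eq_zero_or_pos (rowIndex f b) with h | h
  · rw [h]; exact Nat.zero_le _
  · by_contra hlt
    push_neg at hlt
    have h2 : (b : ℕ) < partialSum f ((rowIndex f b - 1) + 1) := by
      have he : rowIndex f b - 1 + 1 = rowIndex f b := by omega
      rw [he]; exact hlt
    have h3 : rowIndex f b ≤ rowIndex f b - 1 := Nat.sInf_le h2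
    omega

lemma rowIndex_mono {r : ℕ} (f : ℕ → ℕ) {b₁ b₂ : Fin r}
    (hne : ∃ i, (b₂ : ℕ) < partialSum f (i + 1)) (h : (b₁ : ℕ) ≤ (b₂ : ℕ)) :
    rowIndex f b₁ ≤ rowIndex f b₂ := by
  have hge : ∀ i ∈ {i : ℕ | (b₂ : ℕ) < partialSum f (i + 1)}, rowIndex f b₁ ≤ i := by
    intro i hi
    exact Nat.sInf_le (lt_of_le_of_lt h hi)
  exact le_csInf hne hge

lemma exists_descent (g : ℕ → ℕ) (m n : ℕ) (hmn : m < n) (h : g n < g m) :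
    ∃ j, m ≤ j ∧ j < n ∧ g (j + 1) < g j := by
  by_contra hcon
  push_neg at hcon
  have key : ∀ i, m ≤ i → i ≤ n → g m ≤ g i := by
    intro i hmi
    induction i, hmi using Nat.le_induction with
    | base => intro _; exact le_rfl
    | succ i hmi IH =>
      intro hin
      exact le_trans (IH (by omega)) (hcon i hmi (by omega))
  exact absurd (key n (le_of_lt hmn) le_rfl) (not_le.mpr h)

lemma swap_lt_iff {r : ℕ} {a a' u v : Fin r} (ha : (a' : ℕ) = (a : ℕ) + 1) (huv : u ≠ v) :
    Equiv.swap a a' v < Equiv.swap a a' u ↔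
      ((v < u ∧ ¬(v = a ∧ u = a')) ∨ (u = a ∧ v = a')) := by
  have huv' : (u : ℕ) ≠ (v : ℕ) := fun h => huv (Fin.ext h)
  have hval : ∀ w : Fin r, ((Equiv.swap a a' w : Fin r) : ℕ) =
      if (w : ℕ) = (a : ℕ) then (a' : ℕ) else if (w : ℕ) = (a' : ℕ) then (a : ℕ)
        else (w : ℕ) := by
    intro w
    rcases eq_or_ne w a with rfl | h1
    · rw [Equiv.swap_apply_left, if_pos rfl]
    · rcases eq_or_ne w a' with rfl | h2
      · rw [Equiv.swap_apply_right, if_neg (fun h => h1 (Fin.ext h)), if_pos rfl]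
      · rw [Equiv.swap_apply_of_ne_of_ne h1 h2, if_neg (fun h => h1 (Fin.ext h)),
          if_neg (fun h => h2 (Fin.ext h))]
  rw [Fin.lt_def, hval u, hval v]
  simp only [Fin.lt_def, Fin.ext_iff]
  split_ifs <;> omega

lemma permLength_swap_lt {r : ℕ} (e : Equiv.Perm (Fin r)) (a a' : Fin r)
    (ha : (a' : ℕ) = (a : ℕ) + 1) (hd : e⁻¹ a' < e⁻¹ a) :
    permLength (Equiv.swap a a' * e) < permLength e := by
  classical
  have hep : e (e⁻¹ a') = a' := Equiv.apply_symm_apply e a'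
  have heq : e (e⁻¹ a) = a := Equiv.apply_symm_apply e a
  have haa' : a < a' := by rw [Fin.lt_def]; omega
  unfold permLength
  apply Finset.card_lt_card
  have hsub : (Finset.univ.filter (fun p : Fin r × Fin r =>
        p.1 < p.2 ∧ (Equiv.swap a a' * e) p.2 < (Equiv.swap a a' * e) p.1)) ⊆
      (Finset.univ.filter (fun p : Fin r × Fin r => p.1 < p.2 ∧ e p.2 < e p.1)) := by
    rintro ⟨x, y⟩ hmem
    simp only [Finset.mem_filter, Finset.mem_univ, true_and] at hmem ⊢
    obtain ⟨hxy, hv⟩ := hmem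
    rw [Equiv.Perm.mul_apply, Equiv.Perm.mul_apply] at hv
    have hne : e x ≠ e y := fun h => (ne_of_lt hxy) (e.injective h)
    rcases (swap_lt_iff ha hne).mp hv with ⟨h1, _⟩ | ⟨hxa, hya⟩
    · exact ⟨hxy, h1⟩
    · exfalso
      have hx : x = e⁻¹ a := by rw [← hxa]; simp
      have hy : y = e⁻¹ a' := by rw [← hya]; simp
      rw [hx, hy] at hxy
      exact absurd hxy (not_lt.mpr hd.le)
  rw [Finset.ssubset_iff_of_subset hsub]
  refine ⟨(e⁻¹ a', e⁻¹ a), ?_, ?_⟩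
  · simp only [Finset.mem_filter, Finset.mem_univ, true_and]
    exact ⟨hd, by rw [hep, heq]; exact haa'⟩
  · simp only [Finset.mem_filter, Finset.mem_univ, true_and]
    rintro ⟨-, h2⟩
    rw [Equiv.Perm.mul_apply, Equiv.Perm.mul_apply, hep, heq, Equiv.swap_apply_left,
      Equiv.swap_apply_right] at h2
    exact absurd h2 (not_lt.mpr haa'.le)

lemma swap_young {r : ℕ} (f : ℕ → ℕ) (a a' : Fin r) (h : rowIndex f a = rowIndex f a') :
    Equiv.swap a a' ∈ YoungSubgroup f := by
  intro b
  rcases eq_or_ne b a with rfl | h1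
  · rw [Equiv.swap_apply_left]; exact h.symm
  rcases eq_or_ne b a' with rfl | h2
  · rw [Equiv.swap_apply_right]; exact h
  · rw [Equiv.swap_apply_of_ne_of_ne h1 h2]

lemma young_mul {r : ℕ} {f : ℕ → ℕ} {w₁ w₂ : Equiv.Perm (Fin r)}
    (h₁ : w₁ ∈ YoungSubgroup f) (h₂ : w₂ ∈ YoungSubgroup f) :
    w₁ * w₂ ∈ YoungSubgroup f := fun b => (h₁ (w₂ b)).trans (h₂ b)

lemma young_inv {r : ℕ} {f : ℕ → ℕ} {w : Equiv.Perm (Fin r)}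
    (h : w ∈ YoungSubgroup f) : w⁻¹ ∈ YoungSubgroup f := by
  intro b
  have h2 := h (w⁻¹ b)
  rw [show w (w⁻¹ b) = b from Equiv.apply_symm_apply w b] at h2
  exact h2.symm

lemma minRep_increasing {r : ℕ} (f : ℕ → ℕ)
    (hne : ∀ b : Fin r, ∃ i, (b : ℕ) < partialSum f (i + 1))
    {e : Equiv.Perm (Fin r)} (he : e ∈ minimalCosetReps f) :
    ∀ b₁ b₂ : Fin r, rowIndex f b₁ = rowIndex f b₂ → b₁ < b₂ → e⁻¹ b₁ < e⁻¹ b₂ := by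
  intro b₁ b₂ hrow hlt
  by_contra hcon
  have hne' : e⁻¹ b₁ ≠ e⁻¹ b₂ := fun h => (ne_of_lt hlt) ((e⁻¹).injective h)
  have hdesc : e⁻¹ b₂ < e⁻¹ b₁ := lt_of_le_of_ne (not_lt.mp hcon) (Ne.symm hne')
  set g : ℕ → ℕ := fun n => if h : n < r then ((e⁻¹ ⟨n, h⟩ : Fin r) : ℕ) else 0 with hg
  have hgval : ∀ b : Fin r, g (b : ℕ) = ((e⁻¹ b : Fin r) : ℕ) := by
    intro b
    simp only [hg, b.isLt, dif_pos, Fin.eta]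
  have hgb : g (b₂ : ℕ) < g (b₁ : ℕ) := by
    rw [hgval, hgval]
    exact hdesc
  obtain ⟨j, hj1, hj2, hj3⟩ := exists_descent g b₁ b₂ hlt hgb
  have hjr : j < r := lt_trans hj2 b₂.isLt
  have hj1r : j + 1 < r := lt_of_le_of_lt hj2 b₂.isLt
  set A : Fin r := ⟨j, hjr⟩ with hA
  set A' : Fin r := ⟨j + 1, hj1r⟩ with hA'
  have hAA : e⁻¹ A' < e⁻¹ A := by
    have h1 : g j = ((e⁻¹ A : Fin r) : ℕ) := hgval A
    have h2 : g (j + 1) = ((e⁻¹ A' : Fin r) : ℕ) := hgval A'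
    rw [Fin.lt_def]
    omega
  have hrowA : rowIndex f A = rowIndex f A' := by
    have m1 : rowIndex f b₁ ≤ rowIndex f A := rowIndex_mono f (hne A) hj1
    have m2 : rowIndex f A ≤ rowIndex f A' := rowIndex_mono f (hne A') (Nat.le_succ j)
    have m3 : rowIndex f A' ≤ rowIndex f b₂ := rowIndex_mono f (hne b₂) hj2
    omega
  have hs := he _ (swap_young f A A' hrowA)
  have hlt2 := permLength_swap_lt e A A' rfl hAA
  omega

lemma minRep_unique {r : ℕ} (f : ℕ → ℕ)
    (hne : ∀ b : Fin r, ∃ i, (b : ℕ) < partialSum f (i + 1))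
    {e₁ e₂ : Equiv.Perm (Fin r)} (h1 : e₁ ∈ minimalCosetReps f) (h2 : e₂ ∈ minimalCosetReps f)
    (hY : e₁ * e₂⁻¹ ∈ YoungSubgroup f) : e₁ = e₂ := by
  set σ : Equiv.Perm (Fin r) := e₂ * e₁⁻¹ with hσ
  have hσY : σ ∈ YoungSubgroup f := by
    have h := young_inv hY
    have : (e₁ * e₂⁻¹)⁻¹ = σ := by rw [hσ]; group
    rwa [this] at h
  have hmono : ∀ b₁ b₂ : Fin r, rowIndex f b₁ = rowIndex f b₂ → b₁ < b₂ → σ b₁ < σ b₂ := by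
    intro b₁ b₂ hrow hlt
    have k1 : e₁⁻¹ b₁ < e₁⁻¹ b₂ := minRep_increasing f hne h1 b₁ b₂ hrow hlt
    have hs1 : e₂⁻¹ (σ b₁) = e₁⁻¹ b₁ := by simp [hσ]
    have hs2 : e₂⁻¹ (σ b₂) = e₁⁻¹ b₂ := by simp [hσ]
    rcases lt_trichotomy (σ b₁) (σ b₂) with h | h | h
    · exact h
    · exact absurd (σ.injective h) (ne_of_lt hlt)
    · exfalso
      have hr : rowIndex f (σ b₂) = rowIndex f (σ b₁) := by rw [hσY b₁, hσY b₂, hrow]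
      have := minRep_increasing f hne h2 _ _ hr h
      rw [hs1, hs2] at this
      exact absurd k1 (not_lt.mpr this.le)
  have hfix : ∀ n : ℕ, ∀ b : Fin r, (b : ℕ) = n → σ b = b := by
    intro n
    induction n using Nat.strong_induction_on with
    | _ n IH =>
      intro b hbn
      subst hbn
      have IH' : ∀ b' : Fin r, (b' : ℕ) < (b : ℕ) → σ b' = b' := fun b' h => IH _ h b' rfl
      by_contra hne'
      have h1 : ¬ σ b < b := by
        intro h
        have h2 := IH' (σ b) (Fin.lt_def.mp h)
        exact hne' (σ.injective h2)
      have hlt : b < σ b := lt_of_le_of_ne (not_lt.mp h1) (Ne.symm hne')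
      set x : Fin r := σ⁻¹ b with hx
      have hσx : σ x = b := Equiv.apply_symm_apply σ b
      have hxb : x ≠ b := fun h => hne' (h ▸ hσx)
      have h2 : ¬ x < b := by
        intro h
        have h3 := IH' x (Fin.lt_def.mp h)
        rw [hσx] at h3
        exact hxb h3.symm
      have hbx : b < x := lt_of_le_of_ne (not_lt.mp h2) (Ne.symm hxb)
      have hrowx : rowIndex f b = rowIndex f x := by
        conv_lhs => rw [← hσx]
        exact hσY x
      have hfin := hmono b x hrowx hbx
      rw [hσx] at hfin
      exact absurd hlt (not_lt.mpr hfin.le)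
  have hone : σ = 1 := Equiv.ext fun b => hfix _ b rfl
  have : e₂ * e₁⁻¹ = 1 := hσ ▸ hone
  have := mul_inv_eq_one.mp this
  exact this.symm

/-! ### partial sums of `muComp` and `nuComp` -/

lemma ps_mu_of_le (l : ℕ → ℕ) (k c e : ℕ) (he : e ≤ k) :
    partialSum (muComp l k c) e = partialSum l e := by
  unfold partialSum
  refine Finset.sum_congr rfl fun j hj => ?_
  simp only [Finset.mem_range] at hj
  have hk : j ≠ k := by omega
  have hk1 : j ≠ k + 1 := by omega
  simp [muComp, hk, hk1]

lemma ps_mu_k1 (l : ℕ → ℕ) (k c : ℕ) (hc : c ≤ l (k + 1)) :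
    partialSum (muComp l k c) (k + 1) + c = partialSum l (k + 2) := by
  have h1 : partialSum l (k + 2) = partialSum l k + l k + l (k + 1) := by
    rw [ps_succ, ps_succ]
  rw [ps_succ, ps_mu_of_le l k c k le_rfl, h1]
  have h2 : muComp l k c k = l k + l (k + 1) - c := by simp [muComp]
  rw [h2]
  omega

lemma ps_mu_of_ge (l : ℕ → ℕ) (k c : ℕ) (hc : c ≤ l (k + 1)) :
    ∀ e, k + 2 ≤ e → partialSum (muComp l k c) e = partialSum l e := by
  intro e he
  induction e, he using Nat.le_induction with
  | base =>
    have h1 := ps_mu_k1 l k c hc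
    rw [ps_succ]
    have h2 : muComp l k c (k + 1) = c := by simp [muComp]
    omega
  | succ e he IH =>
    rw [ps_succ, ps_succ, IH]
    have hk : e ≠ k := by omega
    have hk1 : e ≠ k + 1 := by omega
    simp [muComp, hk, hk1]

lemma ps_nu_of_le (l : ℕ → ℕ) (k c e : ℕ) (he : e ≤ k + 1) :
    partialSum (nuComp l k c) e = partialSum l e := by
  unfold partialSum
  refine Finset.sum_congr rfl fun j hj => ?_
  simp only [Finset.mem_range] at hj
  have hk : j ≤ k := by omega
  simp [nuComp, hk]

lemma ps_nu_k2 (l : ℕ → ℕ) (k c : ℕ) (hc : c ≤ l (k + 1)) :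
    partialSum (nuComp l k c) (k + 2) + c = partialSum l (k + 2) := by
  have h1 : partialSum l (k + 2) = partialSum l (k + 1) + l (k + 1) := ps_succ l (k + 1)
  have h2 : partialSum (nuComp l k c) (k + 2) =
      partialSum (nuComp l k c) (k + 1) + nuComp l k c (k + 1) := ps_succ _ _
  have h3 : nuComp l k c (k + 1) = l (k + 1) - c := by
    have hx : ¬ (k + 1 ≤ k) := by omega
    simp [nuComp, hx]
  have h4 := ps_nu_of_le l k c (k + 1) le_rfl
  omega

lemma ps_nu_of_ge (l : ℕ → ℕ) (k c : ℕ) (hc : c ≤ l (k + 1)) :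
    ∀ e, k + 2 ≤ e → partialSum (nuComp l k c) (e + 1) = partialSum l e := by
  intro e he
  induction e, he using Nat.le_induction with
  | base =>
    have h1 := ps_nu_k2 l k c hc
    rw [ps_succ]
    have h2 : nuComp l k c (k + 2) = c := by
      have hx : ¬ (k + 2 ≤ k) := by omega
      have hx1 : k + 2 ≠ k + 1 := by omega
      simp [nuComp, hx, hx1]
    omega
  | succ e he IH =>
    have h1 : partialSum (nuComp l k c) (e + 1 + 1) =
        partialSum (nuComp l k c) (e + 1) + nuComp l k c (e + 1) := ps_succ _ _
    have h2 : nuComp l k c (e + 1) = l e := by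
      have hk : ¬ (e + 1 ≤ k) := by omega
      have hk1 : e + 1 ≠ k + 1 := by omega
      have hk2 : e + 1 ≠ k + 2 := by omega
      simp [nuComp, hk, show e ≠ k by omega, show e ≠ k + 1 by omega]
    rw [h1, h2, IH, ps_succ]

lemma rowIndex_nu_eq {r : ℕ} (l : ℕ → ℕ) (k c : ℕ) (hc : c ≤ l (k + 1)) (b : Fin r)
    (hb : ∃ i, (b : ℕ) < partialSum l (i + 1)) :
    rowIndex (nuComp l k c) b =
      if rowIndex l b ≤ k then rowIndex l b
      else if rowIndex (muComp l k c) b = k then k + 1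
      else rowIndex l b + 1 := by
  obtain ⟨hb1, hb2⟩ := rowIndex_bounds l b hb
  set j := rowIndex l b with hj
  have hmu1 := ps_mu_k1 l k c hc
  have hnu2 := ps_nu_k2 l k c hc
  by_cases hjk : j ≤ k
  · rw [if_pos hjk]
    exact rowIndex_eq _ b j (by rw [ps_nu_of_le l k c j (by omega)]; exact hb1)
      (by rw [ps_nu_of_le l k c (j + 1) (by omega)]; exact hb2)
  · rw [if_neg hjk]
    by_cases hjk1 : j = k + 1
    · rw [hjk1] at hb1 hb2
      by_cases hsplit : (b : ℕ) + c < partialSum l (k + 2)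
      · have hμ : rowIndex (muComp l k c) b = k := by
          apply rowIndex_eq _ b k
          · rw [ps_mu_of_le l k c k le_rfl]
            exact le_trans (partialSum_mono l (by omega)) hb1
          · omega
        rw [if_pos hμ]
        apply rowIndex_eq _ b (k + 1)
        · rw [ps_nu_of_le l k c (k + 1) le_rfl]; exact hb1
        · show (b : ℕ) < partialSum (nuComp l k c) (k + 2)
          omega
      · have hμ : rowIndex (muComp l k c) b = k + 1 := by
          apply rowIndex_eq _ b (k + 1)
          · omega
          · rw [ps_mu_of_ge l k c hc (k + 2) le_rfl]; exact hb2
        rw [if_neg (by omega), hjk1]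
        apply rowIndex_eq _ b (k + 2)
        · omega
        · rw [ps_nu_of_ge l k c hc (k + 2) le_rfl]; exact hb2
    · have hj2 : k + 2 ≤ j := by omega
      have hμ : rowIndex (muComp l k c) b = j := by
        apply rowIndex_eq _ b j
        · rw [ps_mu_of_ge l k c hc j hj2]; exact hb1
        · rw [ps_mu_of_ge l k c hc (j + 1) (by omega)]; exact hb2
      rw [if_neg (by omega)]
      apply rowIndex_eq _ b (j + 1)
      · rw [ps_nu_of_ge l k c hc j hj2]; exact hb1
      · rw [ps_nu_of_ge l k c hc (j + 1) (by omega)]; exact hb2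


theorem statement16 (r : ℕ) (l : ℕ → ℕ) (hl : IsCompositionOf l r) (k : ℕ)
    (t : Equiv.Perm (Fin r)) (ht : IsRowStandard l t)
    (X : Finset (Fin r)) (hXZ : X ⊆ rowsKK1 l k t) (hXcard : X.card ≤ l (k + 1))
    (dX : Equiv.Perm (Fin r)) (hdX : IsTabX l (muComp l k X.card) k t X dX)
    (d : Equiv.Perm (Fin r)) (hd : d ∈ minimalCosetReps (r := r) l) :
    (WXset (muComp l k X.card) (nuComp l k X.card) l dX d).Subsingleton := by
  intro x hx y hy
  obtain ⟨hxμ, e₁, he₁D, he₁l, hxe⟩ := hx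
  obtain ⟨hyμ, e₂, he₂D, he₂l, hye⟩ := hy
  obtain ⟨hfin, hsum⟩ := hl
  obtain ⟨n0, hn0⟩ := hfin.toFinset.exists_nat_subset_range
  have hPS : ∀ e, n0 ≤ e → partialSum l e = r := by
    intro e he'
    have hss : Function.support l ⊆ ↑(Finset.range e) := by
      intro z hz
      have h1 : z ∈ hfin.toFinset := hfin.mem_toFinset.mpr hz
      have h2 := hn0 h1
      simp only [Finset.mem_range, Finset.coe_range, Set.mem_Iio] at h2 ⊢
      omega
    have heq : ∑ᶠ i, l i = ∑ i ∈ Finset.range e, l i :=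
      finsum_eq_finset_sum_of_support_subset l hss
    unfold partialSum
    rw [← heq, hsum]
  have hneL : ∀ b : Fin r, ∃ i, (b : ℕ) < partialSum l (i + 1) := by
    intro b
    exact ⟨n0, by rw [hPS (n0 + 1) (by omega)]; exact b.isLt⟩
  have hneN : ∀ b : Fin r, ∃ i, (b : ℕ) < partialSum (nuComp l k X.card) (i + 1) := by
    intro b
    refine ⟨max n0 (k + 2), ?_⟩
    rw [ps_nu_of_ge l k X.card hXcard _ (le_max_right _ _), hPS _ (le_max_left _ _)]
    exact b.isLt
  have hπμ : x * y⁻¹ ∈ YoungSubgroup (muComp l k X.card) := young_mul hxμ (young_inv hyμ)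
  have hxy : x * y⁻¹ = e₁ * e₂⁻¹ := by rw [hxe, hye]; group
  rw [hxy] at hπμ
  have hπl : e₁ * e₂⁻¹ ∈ YoungSubgroup l := young_mul he₁l (young_inv he₂l)
  have hπν : e₁ * e₂⁻¹ ∈ YoungSubgroup (nuComp l k X.card) := by
    intro b
    rw [rowIndex_nu_eq l k X.card hXcard ((e₁ * e₂⁻¹) b) (hneL _),
      rowIndex_nu_eq l k X.card hXcard b (hneL b), hπμ b, hπl b]
  have he : e₁ = e₂ := minRep_unique (nuComp l k X.card) hneN he₁D he₂D hπν
  rw [hxe, hye, he]
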